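/- Each propagation term H_t (t = 0, …, K−1) is a positive semidefinite self-adjoint operator on ℂ^d ⊗ ℂ^{K+1}: for every vector v, the inner product ⟨v, H_t v⟩ is a nonnegative real number. Consequently H_prop = Σ_{t=0}^{K−1} H_t is positive semidefinite, so 0 is its least eigenvalue and the history state Σ_{t=0}^{K} γ_t (for φ ≠ 0) is a ground state of H_prop. -/

import Mathlib

open Matrix Complex
open scoped Kronecker Matrix ComplexOrder

/-- The product `U_t ⋯ U_2 U_1` (with `U i` for `i : Fin K` standing for `U_{i+1}`). -/
noncomputable def prodU (d K : ℕ) (U : Fin K → Matrix (Fin d) (Fin d) ℂ) :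
    ℕ → Matrix (Fin d) (Fin d) ℂ
  | 0 => 1
  | t + 1 => (if h : t < K then U ⟨t, h⟩ else 1) * prodU d K U t

/-- The state `γ_t := (U_t ⋯ U₁ φ) ⊗ e_t` on `ℂ^d ⊗ ℂ^{K+1}`. -/
noncomputable def gammaVec (d K : ℕ) (U : Fin K → Matrix (Fin d) (Fin d) ℂ)
    (φ : Fin d → ℂ) (t : Fin (K + 1)) : Fin d × Fin (K + 1) → ℂ :=
  fun p => (prodU d K U t.val *ᵥ φ) p.1 * (if p.2 = t then 1 else 0)

/-- The clock matrix `e_a e_b†` on `ℂ^{K+1}`. -/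
noncomputable def clockE (K : ℕ) (a b : Fin (K + 1)) :
    Matrix (Fin (K + 1)) (Fin (K + 1)) ℂ :=
  Matrix.single a b 1

/-- The propagation term
`H_t := I ⊗ (e_t e_t† + e_{t+1} e_{t+1}†) − U_{t+1} ⊗ (e_{t+1} e_t†) − U_{t+1}† ⊗ (e_t e_{t+1}†)`. -/
noncomputable def Hterm (d K : ℕ) (U : Fin K → Matrix (Fin d) (Fin d) ℂ) (t : Fin K) :
    Matrix (Fin d × Fin (K + 1)) (Fin d × Fin (K + 1)) ℂ :=
  (1 : Matrix (Fin d) (Fin d) ℂ) ⊗ₖ (clockE K t.castSucc t.castSucc + clockE K t.succ t.succ)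
    - (U t) ⊗ₖ (clockE K t.succ t.castSucc)
    - (U t)ᴴ ⊗ₖ (clockE K t.castSucc t.succ)

/-- The propagation Hamiltonian `H_prop := Σ_{t=0}^{K−1} H_t`. -/
noncomputable def Hprop (d K : ℕ) (U : Fin K → Matrix (Fin d) (Fin d) ℂ) :
    Matrix (Fin d × Fin (K + 1)) (Fin d × Fin (K + 1)) ℂ :=
  ∑ t : Fin K, Hterm d K U t


/-!
Each propagation term factors as `H_t = A_tᴴ A_t` with
`A_t = I ⊗ e_t e_tᴴ − U_{t+1}ᴴ ⊗ e_t e_{t+1}ᴴ`, the cross terms collapsing because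
`U_{t+1} U_{t+1}ᴴ = 1`. Hence every `H_t`, and their sum `H_prop`, is positive semidefinite,
and an eigenvalue `μ` of `H_prop` with eigenvector `v` satisfies `μ ‖v‖² = vᴴ H_prop v ≥ 0`.
The history state is killed by every `A_t`, since its component at time `t + 1` is `U_{t+1}`
applied to its component at time `t`; its component at time `0` is `φ`.
-/

section Hopping

variable {R m n : Type*} [CommRing R] [Fintype m] [Fintype n] [DecidableEq n]

theorem kronecker_single_mulVec (B : Matrix m m R) (a b : n) (x : m × n → R) :
    (B ⊗ₖ single a b (1 : R)) *ᵥ x =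
      fun p => if p.2 = a then (B *ᵥ fun j => x (j, b)) p.1 else 0 := by
  ext ⟨i, c⟩
  simp only [mulVec, dotProduct, Fintype.sum_prod_type, kroneckerMap_apply, single_apply]
  split_ifs with hc
  · rw [Finset.sum_comm, Finset.sum_eq_single b (fun b' _ hb' => by simp [Ne.symm hb']) (by simp)]
    simp [hc]
  · simp [Ne.symm hc]

variable [DecidableEq m] [StarRing R]

def hopFactor (W : Matrix m m R) (a b : n) : Matrix (m × n) (m × n) R :=
  1 ⊗ₖ single a a 1 - Wᴴ ⊗ₖ single a b 1

theorem hopping_eq_conjTranspose_hopFactor_mul_self {W : Matrix m m R} (hW : W * Wᴴ = 1)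
    (a b : n) :
    1 ⊗ₖ (single a a 1 + single b b 1) - W ⊗ₖ single b a 1 - Wᴴ ⊗ₖ single a b 1 =
      (hopFactor W a b)ᴴ * hopFactor W a b := by
  simp only [hopFactor, conjTranspose_sub, conjTranspose_kronecker, conjTranspose_one,
    conjTranspose_conjTranspose, conjTranspose_single, star_one, sub_mul, mul_sub,
    ← mul_kronecker_mul, single_mul_single_same, mul_one, one_mul, hW, kronecker_add]
  abel

theorem hopFactor_mulVec_eq_zero (W : Matrix m m R) {a b : n} {x : m × n → R}
    (hx : Wᴴ *ᵥ (fun j => x (j, b)) = fun j => x (j, a)) :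
    hopFactor W a b *ᵥ x = 0 := by
  ext ⟨i, c⟩
  simp [hopFactor, sub_mulVec, kronecker_single_mulVec, hx]

end Hopping

theorem Matrix.PosSemidef.nonneg_of_mulVec_eq_smul {n 𝕜 : Type*} [Fintype n] [RCLike 𝕜]
    {A : Matrix n n 𝕜} (hA : A.PosSemidef) {μ : 𝕜} {v : n → 𝕜} (hv : v ≠ 0)
    (h : A *ᵥ v = μ • v) : 0 ≤ μ := by
  have hμ : 0 ≤ μ * (star v ⬝ᵥ v) := by
    simpa [h, dotProduct_smul] using hA.dotProduct_mulVec_nonneg v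
  have hnorm : 0 < star v ⬝ᵥ v := dotProduct_star_self_pos_iff.mpr hv
  simpa [hnorm.ne'] using mul_nonneg hμ (inv_pos.mpr hnorm).le

variable {d K : ℕ} {U : Fin K → Matrix (Fin d) (Fin d) ℂ}

theorem prodU_succ (t : Fin K) : prodU d K U (t + 1) = U t * prodU d K U t := by
  simp [prodU, t.isLt]

theorem sum_gammaVec_apply (φ : Fin d → ℂ) (j : Fin d) (b : Fin (K + 1)) :
    (∑ t, gammaVec d K U φ t) (j, b) = (prodU d K U b *ᵥ φ) j := by
  simp [gammaVec, Finset.sum_apply]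

theorem Hterm_eq_conjTranspose_hopFactor_mul_self (t : Fin K)
    (hU : U t ∈ unitaryGroup (Fin d) ℂ) :
    Hterm d K U t = (hopFactor (U t) t.castSucc t.succ)ᴴ * hopFactor (U t) t.castSucc t.succ :=
  hopping_eq_conjTranspose_hopFactor_mul_self (mem_unitaryGroup_iff.mp hU) _ _

theorem posSemidef_Hterm (t : Fin K) (hU : U t ∈ unitaryGroup (Fin d) ℂ) :
    (Hterm d K U t).PosSemidef := by
  rw [Hterm_eq_conjTranspose_hopFactor_mul_self t hU]
  exact posSemidef_conjTranspose_mul_self _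

theorem Hterm_mulVec_sum_gammaVec (t : Fin K) (hU : U t ∈ unitaryGroup (Fin d) ℂ)
    (φ : Fin d → ℂ) : Hterm d K U t *ᵥ ∑ s, gammaVec d K U φ s = 0 := by
  rw [Hterm_eq_conjTranspose_hopFactor_mul_self t hU, ← mulVec_mulVec,
    hopFactor_mulVec_eq_zero, mulVec_zero]
  funext j
  simp only [sum_gammaVec_apply, Fin.val_succ, Fin.val_castSucc, prodU_succ, mulVec_mulVec,
    ← mul_assoc, ← star_eq_conjTranspose, mem_unitaryGroup_iff'.mp hU, one_mul]

theorem Hterm_posSemidef_general (d K : ℕ)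
    (U : Fin K → Matrix (Fin d) (Fin d) ℂ)
    (hU : ∀ i, U i ∈ Matrix.unitaryGroup (Fin d) ℂ)
    (φ : Fin d → ℂ) :
    (∀ t : Fin K, (Hterm d K U t).PosSemidef) ∧
      (Hprop d K U).PosSemidef ∧
      (∀ (μ : ℂ) (v : Fin d × Fin (K + 1) → ℂ), v ≠ 0 → Hprop d K U *ᵥ v = μ • v →
        0 ≤ μ.re ∧ μ.im = 0) ∧
      Hprop d K U *ᵥ (∑ t : Fin (K + 1), gammaVec d K U φ t) = 0 ∧
      (φ ≠ 0 → (∑ t : Fin (K + 1), gammaVec d K U φ t) ≠ 0) := by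
  have hterm : ∀ t, (Hterm d K U t).PosSemidef := fun t => posSemidef_Hterm t (hU t)
  have hprop : (Hprop d K U).PosSemidef := posSemidef_sum _ fun t _ => hterm t
  refine ⟨hterm, hprop, fun μ v hv h => ?_, ?_, fun hφ h => hφ ?_⟩
  · obtain ⟨hre, him⟩ := Complex.nonneg_iff.mp (hprop.nonneg_of_mulVec_eq_smul hv h)
    exact ⟨hre, him.symm⟩
  · rw [Hprop, sum_mulVec]
    exact Finset.sum_eq_zero fun t _ => Hterm_mulVec_sum_gammaVec t (hU t) φ
  · funext j
    simpa only [sum_gammaVec_apply, Fin.val_zero, prodU, one_mulVec, Pi.zero_apply]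
      using congrFun h (j, 0)

/-- Each propagation term `H_t` is a positive semidefinite self-adjoint operator
(`⟨v, H_t v⟩` is a nonnegative real for every `v`); consequently `H_prop` is positive
semidefinite, `0` is its least eigenvalue, and the history state `Σ_t γ_t` (for `φ ≠ 0`)
is a ground state of `H_prop`. -/
theorem Hterm_posSemidef (d K : ℕ) (hd : 1 ≤ d) (hK : 1 ≤ K)
    (U : Fin K → Matrix (Fin d) (Fin d) ℂ)
    (hU : ∀ i, U i ∈ Matrix.unitaryGroup (Fin d) ℂ)
    (φ : Fin d → ℂ) :
    (∀ t : Fin K, (Hterm d K U t).PosSemidef) ∧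
      (Hprop d K U).PosSemidef ∧
      (∀ (μ : ℂ) (v : Fin d × Fin (K + 1) → ℂ), v ≠ 0 → Hprop d K U *ᵥ v = μ • v →
        0 ≤ μ.re ∧ μ.im = 0) ∧
      Hprop d K U *ᵥ (∑ t : Fin (K + 1), gammaVec d K U φ t) = 0 ∧
      (φ ≠ 0 → (∑ t : Fin (K + 1), gammaVec d K U φ t) ≠ 0) :=
  Hterm_posSemidef_general d K U hU φ
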